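/- Let (X,ρ) be a compact metric space, f : X → X continuous, k, h ∈ ℕ, and x ∈ X. Then entr⁺(f^k, f^h(x)) = entr⁺(f^k, x) and entr⁻(f^k, f^h(x)) = entr⁻(f^k, x). -/

import Mathlib

open Filter Topology Set MeasureTheory

section Defs

variable {X : Type*} [MetricSpace X]

/-- Bowen's metric `ρ^f_m(y,z) = max_{0 ≤ i < m} ρ(f^i y, f^i z)`. -/
noncomputable def bowenDist (f : X → X) (m : ℕ) (y z : X) : ℝ :=
  (((Finset.range m).sup fun i => nndist (f^[i] y) (f^[i] z)) : NNReal)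

open scoped Classical in
/-- The correlation sum `C^f_m(x,n,ε)`. -/
noncomputable def corrSum (f : X → X) (m : ℕ) (x : X) (n : ℕ) (ε : ℝ) : ℝ :=
  (((Finset.range n ×ˢ Finset.range n).filter fun q =>
      bowenDist f m (f^[q.1] x) (f^[q.2] x) ≤ ε).card : ℝ) / (n : ℝ) ^ 2

/-- `ĉ^f_m(x,ε) = limsup_{n→∞} C^f_m(x,n,ε)`. -/
noncomputable def corrUpper (f : X → X) (m : ℕ) (x : X) (ε : ℝ) : ℝ :=
  Filter.limsup (fun n : ℕ => corrSum f m x n ε) Filter.atTop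

/-- `č^f_m(x,ε) = liminf_{n→∞} C^f_m(x,n,ε)`. -/
noncomputable def corrLower (f : X → X) (m : ℕ) (x : X) (ε : ℝ) : ℝ :=
  Filter.liminf (fun n : ℕ => corrSum f m x n ε) Filter.atTop

/-- The upper local correlation entropy `entr⁺(f,x) = lim_{ε→0⁺} limsup_m (−1/m) log č^f_m(x,ε)`;
the limit as `ε → 0⁺` exists by monotonicity in `ε`, and is expressed here as a `limsup`
along `𝓝[>] 0` (with values in `EReal`). -/
noncomputable def entrUpper (f : X → X) (x : X) : EReal :=
  Filter.limsup (fun ε : ℝ =>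
      Filter.limsup (fun m : ℕ => ((-(1 / (m : ℝ)) * Real.log (corrLower f m x ε) : ℝ) : EReal))
        Filter.atTop)
    (𝓝[>] (0 : ℝ))

/-- The lower local correlation entropy `entr⁻(f,x) = lim_{ε→0⁺} liminf_m (−1/m) log ĉ^f_m(x,ε)`. -/
noncomputable def entrLower (f : X → X) (x : X) : EReal :=
  Filter.limsup (fun ε : ℝ =>
      Filter.liminf (fun m : ℕ => ((-(1 / (m : ℝ)) * Real.log (corrUpper f m x ε) : ℝ) : EReal))
        Filter.atTop)
    (𝓝[>] (0 : ℝ))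

/-- `r_m(ε,K)`: the smallest cardinality of a subset of `K` which `(m,ε)`-spans `K`. -/
noncomputable def spanNumOn (f : X → X) (K : Set X) (m : ℕ) (ε : ℝ) : ℕ :=
  sInf {k : ℕ | ∃ A : Finset X, ↑A ⊆ K ∧ A.card = k ∧ ∀ y ∈ K, ∃ a ∈ A, bowenDist f m y a ≤ ε}

/-- Bowen's topological entropy of `f` on `K` (for `K = univ`, of `f` itself;
for closed invariant `K`, of the restriction of `f` to `K`). -/
noncomputable def topEntropyOn (f : X → X) (K : Set X) : EReal :=
  Filter.limsup (fun ε : ℝ =>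
      Filter.limsup (fun n : ℕ => (((1 / (n : ℝ)) * Real.log (spanNumOn f K n ε) : ℝ) : EReal))
        Filter.atTop)
    (𝓝[>] (0 : ℝ))

end Defs

/-!
Write `g = f^[k]`. If `F` is continuous and commutes with `g`, uniform continuity of `F` on the
compact space turns Bowen-`δ`-close pairs `(g^[i] x, g^[j] x)` into Bowen-`ε`-close pairs
`(g^[i] (F x), g^[j] (F x))`, so the correlation sums of `F x` at scale `ε` dominate those of `x` at
scale `δ`, whence `entr(g, F x) ≤ entr(g, x)`. Conversely, dropping the first `s` points of an
orbit changes its correlation sums by `O(1/n)`, so `entr(g, x) ≤ entr(g, g^[s] x)`. For `k ≥ 1`,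
`g^[h] x = f^[h(k-1)] (f^[h] x)`, and chaining these inequalities with `F = f^[h]` and
`F = f^[h(k-1)]` gives both equalities.

Comparing `-(1/m) log` of correlation sums needs them positive (`Real.log 0 = 0`); at every
positive scale they are bounded below by pigeonholing the orbit into a finite cover by small balls.
-/

section BowenDist

variable {X : Type*} [MetricSpace X]

theorem bowenDist_eq_dist_pi (g : X → X) (m : ℕ) (y z : X) :
    bowenDist g m y z = dist (fun i : Fin m => g^[i] y) (fun i : Fin m => g^[i] z) := by
  rw [bowenDist, dist_pi_def, ← Nat.Iio_eq_range, ← Fin.map_valEmbedding_univ, Finset.sup_map]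
  rfl

theorem bowenDist_self (g : X → X) (m : ℕ) (y : X) : bowenDist g m y y = 0 := by
  simp [bowenDist_eq_dist_pi]

variable [CompactSpace X] {g : X → X}

theorem exists_pos_forall_dist_lt_bowenDist_lt (hg : Continuous g) (m : ℕ) {ε : ℝ}
    (hε : 0 < ε) : ∃ δ > 0, ∀ y z : X, dist y z < δ → bowenDist g m y z < ε := by
  have horbit : UniformContinuous fun y : X => fun i : Fin m => g^[i] y :=
    CompactSpace.uniformContinuous_of_continuous (continuous_pi fun i => hg.iterate i)
  obtain ⟨δ, hδ, H⟩ := Metric.uniformContinuous_iff.1 horbit ε hε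
  exact ⟨δ, hδ, fun y z hyz => by simpa only [bowenDist_eq_dist_pi] using H hyz⟩

theorem exists_pos_forall_bowenDist_le_map_le {F : X → X} (hF : Continuous F)
    (hcomm : Function.Commute F g) {ε : ℝ} (hε : 0 < ε) :
    ∃ δ > 0, ∀ (m : ℕ) (y z : X), bowenDist g m y z ≤ δ → bowenDist g m (F y) (F z) ≤ ε := by
  obtain ⟨δ, hδ, H⟩ := Metric.uniformContinuous_iff.1
    (CompactSpace.uniformContinuous_of_continuous hF) ε hε
  refine ⟨δ / 2, half_pos hδ, fun m y z hyz => ?_⟩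
  rw [bowenDist_eq_dist_pi] at hyz
  rw [bowenDist_eq_dist_pi, dist_pi_le_iff hε.le]
  intro i
  rw [← (hcomm.iterate_right i).eq, ← (hcomm.iterate_right i).eq]
  exact (H ((dist_le_pi_dist _ _ i).trans hyz |>.trans_lt (half_lt_self hδ))).le

end BowenDist

section CorrSum

open scoped Finset

variable {X : Type*} [MetricSpace X] {g : X → X}

theorem corrSum_nonneg (g : X → X) (m : ℕ) (x : X) (n : ℕ) (ε : ℝ) :
    0 ≤ corrSum g m x n ε := by
  unfold corrSum; positivity

theorem card_filter_range_product_le (p : ℕ × ℕ → Prop) [DecidablePred p] (n : ℕ) :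
    #{q ∈ Finset.range n ×ˢ Finset.range n | p q} ≤ n ^ 2 := by
  simpa [sq] using Finset.card_filter_le (Finset.range n ×ˢ Finset.range n) p

theorem corrSum_le_one (g : X → X) (m : ℕ) (x : X) (n : ℕ) (ε : ℝ) :
    corrSum g m x n ε ≤ 1 := by
  rcases n.eq_zero_or_pos with rfl | hn
  · simp [corrSum]
  rw [corrSum, div_le_one (by positivity)]
  exact_mod_cast card_filter_range_product_le _ n

theorem corrSum_le_corrSum_of_imp {m : ℕ} {x x' : X} {δ ε : ℝ} (n : ℕ)
    (h : ∀ i j : ℕ, bowenDist g m (g^[i] x) (g^[j] x) ≤ δ →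
      bowenDist g m (g^[i] x') (g^[j] x') ≤ ε) :
    corrSum g m x n δ ≤ corrSum g m x' n ε := by
  unfold corrSum
  refine div_le_div_of_nonneg_right ?_ (by positivity)
  exact_mod_cast Finset.card_le_card <|
    Finset.monotone_filter_right _ fun (q : ℕ × ℕ) _ hq => h q.1 q.2 hq

theorem corrSum_mono (g : X → X) (m : ℕ) (x : X) (n : ℕ) : Monotone (corrSum g m x n) :=
  fun _ _ hδε => corrSum_le_corrSum_of_imp n fun _ _ hij => hij.trans hδε

theorem exists_pos_mul_sq_le_card_dist_lt [CompactSpace X] (u : ℕ → X) {η : ℝ} (hη : 0 < η) :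
    ∃ c > 0, ∀ n : ℕ,
      c * (n : ℝ) ^ 2 ≤ #{q ∈ Finset.range n ×ˢ Finset.range n | dist (u q.1) (u q.2) < η} := by
  classical
  obtain ⟨t, -, ht, hcover⟩ :=
    finite_cover_balls_of_compact (isCompact_univ (X := X)) (half_pos hη)
  have hnear (i : ℕ) : ∃ y ∈ ht.toFinset, dist (u i) y < η / 2 := by
    simpa using hcover (mem_univ (u i))
  choose φ hφT hφ using hnear
  set T := ht.toFinset
  have hT : 0 < #T := Finset.card_pos.2 ⟨_, hφT 0⟩
  refine ⟨1 / (#T : ℝ) ^ 2, by positivity, fun n => ?_⟩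
  -- some ball holds at least `n / #T` of the first `n` terms of `u`; these are pairwise `η`-close
  obtain ⟨y, -, hy⟩ := Finset.exists_le_card_fiber_of_nsmul_le_card_of_maps_to
    (s := Finset.range n) (fun i _ => hφT i) (Finset.card_pos.1 hT) (b := (n : ℝ) / #T)
    (by rw [nsmul_eq_mul, Finset.card_range]; field_simp; rfl)
  set S := {i ∈ Finset.range n | φ i = y}
  have hclose : S ×ˢ S ⊆ {q ∈ Finset.range n ×ˢ Finset.range n | dist (u q.1) (u q.2) < η} := by
    intro q hq
    simp only [S, Finset.mem_product, Finset.mem_filter] at hq ⊢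
    refine ⟨⟨hq.1.1, hq.2.1⟩, ?_⟩
    calc dist (u q.1) (u q.2) ≤ dist (u q.1) y + dist (u q.2) y := dist_triangle_right _ _ _
      _ < η / 2 + η / 2 := by gcongr <;> [exact hq.1.2 ▸ hφ q.1; exact hq.2.2 ▸ hφ q.2]
      _ = η := add_halves η
  calc 1 / (#T : ℝ) ^ 2 * n ^ 2 = ((n : ℝ) / #T) ^ 2 := by ring
    _ ≤ (#S : ℝ) ^ 2 := by gcongr
    _ = #(S ×ˢ S) := by rw [Finset.card_product, Nat.cast_mul, sq]
    _ ≤ _ := by exact_mod_cast Finset.card_le_card hclose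

theorem exists_pos_le_corrSum [CompactSpace X] (hg : Continuous g) (m : ℕ) (x : X) {δ : ℝ}
    (hδ : 0 < δ) : ∃ c > 0, ∀ n, 0 < n → c ≤ corrSum g m x n δ := by
  obtain ⟨η, hη, hbowen⟩ := exists_pos_forall_dist_lt_bowenDist_lt hg m hδ
  obtain ⟨c, hc, hcount⟩ := exists_pos_mul_sq_le_card_dist_lt (fun i => g^[i] x) hη
  refine ⟨c, hc, fun n hn => ?_⟩
  rw [corrSum, le_div_iff₀ (by positivity)]
  refine (hcount n).trans ?_
  exact_mod_cast Finset.card_le_card <|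
    Finset.monotone_filter_right _ fun q _ hq => (hbowen _ _ hq).le

theorem div_sq_le_div_add_sq_add_div {q n s : ℝ} (hn : 1 ≤ n) (hs : 0 ≤ s)
    (hq : q ≤ (n + s) ^ 2) : q / n ^ 2 ≤ q / (n + s) ^ 2 + (2 * s + s ^ 2) / n := by
  have hn₀ : 0 < n := by linarith
  have hgap : 0 ≤ (n + s) ^ 2 - n ^ 2 := by nlinarith
  calc q / n ^ 2 = q / (n + s) ^ 2 + q * ((n + s) ^ 2 - n ^ 2) / (n ^ 2 * (n + s) ^ 2) := by
        field_simp; ring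
    _ ≤ q / (n + s) ^ 2 + (n + s) ^ 2 * ((n + s) ^ 2 - n ^ 2) / (n ^ 2 * (n + s) ^ 2) := by
        gcongr
    _ = q / (n + s) ^ 2 + (2 * s * n + s ^ 2) / n ^ 2 := by field_simp; ring
    _ ≤ q / (n + s) ^ 2 + (2 * s + s ^ 2) / n := by
        gcongr q / (n + s) ^ 2 + ?_
        rw [div_le_div_iff₀ (by positivity) hn₀]
        nlinarith [mul_nonneg (sq_nonneg s) (sub_nonneg.2 hn)]

theorem corrSum_iterate_le (m s : ℕ) (x : X) (ε : ℝ) {n : ℕ} (hn : 0 < n) :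
    corrSum g m (g^[s] x) n ε ≤ corrSum g m x (n + s) ε + (2 * s + s ^ 2) / n := by
  set P := {q ∈ Finset.range n ×ˢ Finset.range n |
    bowenDist g m (g^[q.1] (g^[s] x)) (g^[q.2] (g^[s] x)) ≤ ε}
  set Q := {q ∈ Finset.range (n + s) ×ˢ Finset.range (n + s) |
    bowenDist g m (g^[q.1] x) (g^[q.2] x) ≤ ε}
  have hPQ : #P ≤ #Q := by
    refine Finset.card_le_card_of_injOn (fun q => (q.1 + s, q.2 + s)) (fun q hq => ?_) ?_
    · simp only [P, Q, Finset.coe_filter, Set.mem_ofPred_eq, Finset.mem_product,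
        Finset.mem_range, Function.iterate_add_apply] at hq ⊢
      exact ⟨⟨by omega, by omega⟩, hq.2⟩
    · exact fun a _ b _ hab => Prod.ext_iff.2 (by simpa using hab)
  have hQ : #Q ≤ (n + s) ^ 2 := card_filter_range_product_le _ (n + s)
  calc corrSum g m (g^[s] x) n ε ≤ #Q / (n : ℝ) ^ 2 := by
        rw [corrSum]; gcongr
    _ ≤ #Q / ((n : ℝ) + s) ^ 2 + (2 * s + s ^ 2) / n :=
        div_sq_le_div_add_sq_add_div (by exact_mod_cast hn) (by positivity) (by exact_mod_cast hQ)
    _ = corrSum g m x (n + s) ε + (2 * s + s ^ 2) / n := by rw [corrSum, Nat.cast_add]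

theorem exists_pos_forall_corrSum_le_corrSum_map [CompactSpace X] {F : X → X}
    (hF : Continuous F) (hcomm : Function.Commute F g) {ε : ℝ} (hε : 0 < ε) :
    ∃ δ > 0, ∀ (m : ℕ) (x : X) (n : ℕ), corrSum g m x n δ ≤ corrSum g m (F x) n ε := by
  obtain ⟨δ, hδ, hF⟩ := exists_pos_forall_bowenDist_le_map_le hF hcomm hε
  refine ⟨δ, hδ, fun m x n => corrSum_le_corrSum_of_imp n fun i j hij => ?_⟩
  rw [← (hcomm.iterate_right i).eq, ← (hcomm.iterate_right j).eq]
  exact hF m _ _ hij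

theorem corrSum_id_eq (m : ℕ) (y z : X) (n : ℕ) (ε : ℝ) :
    corrSum id m y n ε = corrSum id m z n ε := by
  simp [corrSum, bowenDist_self]

end CorrSum

section LiminfLimsup

variable {ι : Type*} {l : Filter ι} [l.NeBot] {u v e : ι → ℝ}

theorem liminf_le_liminf_of_le_add_of_tendsto_zero (hu : IsBoundedUnder (· ≥ ·) l u)
    (hv_le : IsBoundedUnder (· ≤ ·) l v) (hv_ge : IsBoundedUnder (· ≥ ·) l v)
    (he : Tendsto e l (𝓝 0)) (h : ∀ᶠ i in l, u i ≤ e i + v i) :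
    liminf u l ≤ liminf v l :=
  calc liminf u l ≤ liminf (e + v) l :=
        liminf_le_liminf h hu (isBoundedUnder_le_add he.isBoundedUnder_le hv_le).isCoboundedUnder_ge
    _ ≤ limsup e l + liminf v l :=
        liminf_add_le he.isBoundedUnder_ge he.isBoundedUnder_le hv_ge hv_le.isCoboundedUnder_ge
    _ = liminf v l := by rw [he.limsup_eq, zero_add]

theorem limsup_le_limsup_of_le_add_of_tendsto_zero (hu : IsBoundedUnder (· ≥ ·) l u)
    (hv_le : IsBoundedUnder (· ≤ ·) l v) (hv_ge : IsBoundedUnder (· ≥ ·) l v)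
    (he : Tendsto e l (𝓝 0)) (h : ∀ᶠ i in l, u i ≤ v i + e i) :
    limsup u l ≤ limsup v l :=
  calc limsup u l ≤ limsup (v + e) l :=
        limsup_le_limsup h hu.isCoboundedUnder_le (isBoundedUnder_le_add hv_le he.isBoundedUnder_le)
    _ ≤ limsup v l + limsup e l :=
        limsup_add_le hv_ge hv_le he.isBoundedUnder_ge.isCoboundedUnder_le he.isBoundedUnder_le
    _ = limsup v l := by rw [he.limsup_eq, add_zero]

end LiminfLimsup

section CorrLimits

variable {X : Type*} [MetricSpace X] {g : X → X}

theorem isBoundedUnder_le_corrSum (g : X → X) (m : ℕ) (x : X) (ε : ℝ) {ι : Type*}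
    (l : Filter ι) (N : ι → ℕ) : IsBoundedUnder (· ≤ ·) l fun i => corrSum g m x (N i) ε :=
  isBoundedUnder_of ⟨1, fun i => corrSum_le_one g m x (N i) ε⟩

theorem isBoundedUnder_ge_corrSum (g : X → X) (m : ℕ) (x : X) (ε : ℝ) {ι : Type*}
    (l : Filter ι) (N : ι → ℕ) : IsBoundedUnder (· ≥ ·) l fun i => corrSum g m x (N i) ε :=
  isBoundedUnder_of ⟨0, fun i => corrSum_nonneg g m x (N i) ε⟩

theorem corrLower_le_corrLower {m : ℕ} {x x' : X} {δ ε : ℝ}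
    (h : ∀ n, corrSum g m x n δ ≤ corrSum g m x' n ε) : corrLower g m x δ ≤ corrLower g m x' ε :=
  liminf_le_liminf (.of_forall h) (isBoundedUnder_ge_corrSum g m x δ atTop id)
    (isBoundedUnder_le_corrSum g m x' ε atTop id).isCoboundedUnder_ge

theorem corrUpper_le_corrUpper {m : ℕ} {x x' : X} {δ ε : ℝ}
    (h : ∀ n, corrSum g m x n δ ≤ corrSum g m x' n ε) : corrUpper g m x δ ≤ corrUpper g m x' ε :=
  limsup_le_limsup (.of_forall h)
    (isBoundedUnder_ge_corrSum g m x δ atTop id).isCoboundedUnder_le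
    (isBoundedUnder_le_corrSum g m x' ε atTop id)

theorem corrLower_mono (g : X → X) (m : ℕ) (x : X) : Monotone (corrLower g m x) :=
  fun _ _ hδε => corrLower_le_corrLower fun n => corrSum_mono g m x n hδε

theorem corrUpper_mono (g : X → X) (m : ℕ) (x : X) : Monotone (corrUpper g m x) :=
  fun _ _ hδε => corrUpper_le_corrUpper fun n => corrSum_mono g m x n hδε

theorem corrLower_le_corrUpper (g : X → X) (m : ℕ) (x : X) (ε : ℝ) :
    corrLower g m x ε ≤ corrUpper g m x ε :=
  liminf_le_limsup (isBoundedUnder_le_corrSum g m x ε atTop id)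
    (isBoundedUnder_ge_corrSum g m x ε atTop id)

theorem corrLower_pos [CompactSpace X] (hg : Continuous g) (m : ℕ) (x : X) {δ : ℝ}
    (hδ : 0 < δ) : 0 < corrLower g m x δ := by
  obtain ⟨c, hc, hle⟩ := exists_pos_le_corrSum hg m x hδ
  exact hc.trans_le <| le_liminf_of_le
    (isBoundedUnder_le_corrSum g m x δ atTop id).isCoboundedUnder_ge
    ((eventually_gt_atTop 0).mono hle)

theorem corrUpper_pos [CompactSpace X] (hg : Continuous g) (m : ℕ) (x : X) {δ : ℝ}
    (hδ : 0 < δ) : 0 < corrUpper g m x δ :=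
  (corrLower_pos hg m x hδ).trans_le (corrLower_le_corrUpper g m x δ)

theorem corrLower_iterate_le (m s : ℕ) (x : X) (ε : ℝ) :
    corrLower g m (g^[s] x) ε ≤ corrLower g m x ε := by
  have key := liminf_le_liminf_of_le_add_of_tendsto_zero
    (v := fun n => corrSum g m x (n + s) ε) (isBoundedUnder_ge_corrSum g m _ ε atTop id)
    (isBoundedUnder_le_corrSum g m x ε atTop (· + s))
    (isBoundedUnder_ge_corrSum g m x ε atTop (· + s)) (tendsto_const_div_atTop_nhds_zero_nat _)
    ((eventually_gt_atTop 0).mono fun n hn =>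
      (corrSum_iterate_le m s x ε hn).trans_eq (add_comm _ _))
  rwa [liminf_nat_add (fun n => corrSum g m x n ε) s] at key

theorem corrUpper_iterate_le (m s : ℕ) (x : X) (ε : ℝ) :
    corrUpper g m (g^[s] x) ε ≤ corrUpper g m x ε := by
  have key := limsup_le_limsup_of_le_add_of_tendsto_zero
    (v := fun n => corrSum g m x (n + s) ε) (isBoundedUnder_ge_corrSum g m _ ε atTop id)
    (isBoundedUnder_le_corrSum g m x ε atTop (· + s))
    (isBoundedUnder_ge_corrSum g m x ε atTop (· + s)) (tendsto_const_div_atTop_nhds_zero_nat _)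
    ((eventually_gt_atTop 0).mono fun n hn => corrSum_iterate_le m s x ε hn)
  rwa [limsup_nat_add (fun n => corrSum g m x n ε) s] at key

end CorrLimits

section Entropy

theorem limsup_nhdsGT_le_limsup_of_antitoneOn {α : Type*} [CompleteLattice α] {a : ℝ}
    {φ ψ : ℝ → α} (hφ : AntitoneOn φ (Ioi a)) (h : ∀ ε > a, ∃ δ > a, ψ ε ≤ φ δ) :
    limsup ψ (𝓝[>] a) ≤ limsup φ (𝓝[>] a) := by
  have hφ_le : ∀ δ > a, φ δ ≤ limsup φ (𝓝[>] a) := fun δ hδ =>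
    (le_liminf_of_le (by isBoundedDefault) <| by
      filter_upwards [Ioo_mem_nhdsGT hδ] with ε hε using hφ hε.1 hδ hε.2.le).trans
      liminf_le_limsup
  refine limsup_le_of_le (by isBoundedDefault) ?_
  filter_upwards [self_mem_nhdsWithin] with ε hε
  obtain ⟨δ, hδ, hψ⟩ := h ε hε
  exact hψ.trans (hφ_le δ hδ)

theorem neg_one_div_mul_log_le (m : ℕ) {a b : ℝ} (ha : 0 < a) (hab : a ≤ b) :
    ((-(1 / (m : ℝ)) * Real.log b : ℝ) : EReal) ≤ ((-(1 / (m : ℝ)) * Real.log a : ℝ) : EReal) :=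
  EReal.coe_le_coe_iff.2 <|
    mul_le_mul_of_nonpos_left (Real.log_le_log ha hab) (neg_nonpos.2 (by positivity))

variable {X : Type*} [MetricSpace X]

theorem entrUpper_id_eq (y z : X) : entrUpper id y = entrUpper id z := by
  simp only [entrUpper, corrLower, corrSum_id_eq _ y z]

theorem entrLower_id_eq (y z : X) : entrLower id y = entrLower id z := by
  simp only [entrLower, corrUpper, corrSum_id_eq _ y z]

variable [CompactSpace X] {g : X → X}

theorem entrUpper_le_entrUpper (hg : Continuous g) {x y : X}
    (h : ∀ ε > 0, ∃ δ > 0, ∀ m, corrLower g m y δ ≤ corrLower g m x ε) :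
    entrUpper g x ≤ entrUpper g y := by
  refine limsup_nhdsGT_le_limsup_of_antitoneOn (fun ε hε δ _ hεδ => ?_) fun ε hε => ?_
  · exact limsup_le_limsup <| .of_forall fun m =>
      neg_one_div_mul_log_le m (corrLower_pos hg m y hε) (corrLower_mono g m y hεδ)
  · obtain ⟨δ, hδ, hle⟩ := h ε hε
    exact ⟨δ, hδ, limsup_le_limsup <| .of_forall fun m =>
      neg_one_div_mul_log_le m (corrLower_pos hg m y hδ) (hle m)⟩

theorem entrLower_le_entrLower (hg : Continuous g) {x y : X}
    (h : ∀ ε > 0, ∃ δ > 0, ∀ m, corrUpper g m y δ ≤ corrUpper g m x ε) :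
    entrLower g x ≤ entrLower g y := by
  refine limsup_nhdsGT_le_limsup_of_antitoneOn (fun ε hε δ _ hεδ => ?_) fun ε hε => ?_
  · exact liminf_le_liminf <| .of_forall fun m =>
      neg_one_div_mul_log_le m (corrUpper_pos hg m y hε) (corrUpper_mono g m y hεδ)
  · obtain ⟨δ, hδ, hle⟩ := h ε hε
    exact ⟨δ, hδ, liminf_le_liminf <| .of_forall fun m =>
      neg_one_div_mul_log_le m (corrUpper_pos hg m y hδ) (hle m)⟩

theorem entrUpper_map_le (hg : Continuous g) {F : X → X} (hF : Continuous F)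
    (hcomm : Function.Commute F g) (x : X) : entrUpper g (F x) ≤ entrUpper g x :=
  entrUpper_le_entrUpper hg fun _ hε =>
    let ⟨δ, hδ, hle⟩ := exists_pos_forall_corrSum_le_corrSum_map hF hcomm hε
    ⟨δ, hδ, fun m => corrLower_le_corrLower (hle m x)⟩

theorem entrLower_map_le (hg : Continuous g) {F : X → X} (hF : Continuous F)
    (hcomm : Function.Commute F g) (x : X) : entrLower g (F x) ≤ entrLower g x :=
  entrLower_le_entrLower hg fun _ hε =>
    let ⟨δ, hδ, hle⟩ := exists_pos_forall_corrSum_le_corrSum_map hF hcomm hε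
    ⟨δ, hδ, fun m => corrUpper_le_corrUpper (hle m x)⟩

theorem entrUpper_le_entrUpper_iterate (hg : Continuous g) (x : X) (s : ℕ) :
    entrUpper g x ≤ entrUpper g (g^[s] x) :=
  entrUpper_le_entrUpper hg fun ε hε => ⟨ε, hε, fun m => corrLower_iterate_le m s x ε⟩

theorem entrLower_le_entrLower_iterate (hg : Continuous g) (x : X) (s : ℕ) :
    entrLower g x ≤ entrLower g (g^[s] x) :=
  entrLower_le_entrLower hg fun ε hε => ⟨ε, hε, fun m => corrUpper_iterate_le m s x ε⟩

end Entropy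

theorem entr_iterate_point_general {X : Type*} [MetricSpace X] [CompactSpace X]
    (f : X → X) (hf : Continuous f) (k h : ℕ) (x : X) :
    entrUpper (f^[k]) (f^[h] x) = entrUpper (f^[k]) x ∧
    entrLower (f^[k]) (f^[h] x) = entrLower (f^[k]) x := by
  rcases k.eq_zero_or_pos with rfl | hk
  · rw [Function.iterate_zero]
    exact ⟨entrUpper_id_eq _ _, entrLower_id_eq _ _⟩
  have hg : Continuous f^[k] := hf.iterate k
  have hcomm (j : ℕ) : Function.Commute f^[j] f^[k] := Function.Commute.iterate_iterate_self f j k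
  have horbit : (f^[k])^[h] x = f^[h * (k - 1)] (f^[h] x) := by
    rw [← Function.iterate_mul, ← Function.iterate_add_apply]
    congr 1
    rw [Nat.mul_sub_one, Nat.sub_add_cancel (Nat.le_mul_of_pos_right h hk), mul_comm]
  constructor
  · refine le_antisymm (entrUpper_map_le hg (hf.iterate h) (hcomm h) x) ?_
    calc entrUpper f^[k] x ≤ entrUpper f^[k] ((f^[k])^[h] x) :=
          entrUpper_le_entrUpper_iterate hg x h
      _ ≤ entrUpper f^[k] (f^[h] x) := horbit ▸ entrUpper_map_le hg (hf.iterate _) (hcomm _) _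
  · refine le_antisymm (entrLower_map_le hg (hf.iterate h) (hcomm h) x) ?_
    calc entrLower f^[k] x ≤ entrLower f^[k] ((f^[k])^[h] x) :=
          entrLower_le_entrLower_iterate hg x h
      _ ≤ entrLower f^[k] (f^[h] x) := horbit ▸ entrLower_map_le hg (hf.iterate _) (hcomm _) _

/-- `entr⁺(f^k, f^h(x)) = entr⁺(f^k, x)` and `entr⁻(f^k, f^h(x)) = entr⁻(f^k, x)`. -/
theorem entr_iterate_point {X : Type*} [MetricSpace X] [CompactSpace X]
    (f : X → X) (hf : Continuous f) (k h : ℕ) (hk : 0 < k) (hh : 0 < h) (x : X) :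
    entrUpper (f^[k]) (f^[h] x) = entrUpper (f^[k]) x ∧
    entrLower (f^[k]) (f^[h] x) = entrLower (f^[k]) x :=
  entr_iterate_point_general f hf k h x
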